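/- arXiv:2011.09291 — 2 statements merged into one kernel-verified Lean document; each statement's English description precedes it below -/
import Mathlib

section
/- Fix an integer n ≥ 3, masses m₁,…,mₙ > 0, and s > 1. Define the collinearity function θ(q) = max_{i≠j} arccos( |⟨(qᵢ−qⱼ)/|qᵢ−qⱼ|, e₁⟩| ) ∈ [0, π/2], where e₁ = (1,0), and the gradient vector field G(q) = M⁻¹∇U(q) − (⟨M⁻¹∇U(q), Ŝ(s)q⟩_M / ⟨Ŝ(s)q, Ŝ(s)q⟩_M)·Ŝ(s)q, where (M⁻¹∇U(q))ᵢ = mᵢ⁻¹∇_{qᵢ}U(q) (the mass-metric gradient of U restricted to the ellipsoid {I_s = 1}). Then: (i) if all qᵢ lie on the x-axis ℝ×{0} then all components of G(q) lie in ℝ×{0} (the set of configurations collinear along the x-axis is invariant under the gradient flow); and (ii) for every C¹ curve γ : (a,b) → (ℝ²)ⁿ with each γ(t) collision-free and centered with I_s(γ(t)) = 1, satisfying γ'(t) = G(γ(t)) and 0 < θ(γ(t)) ≤ π/4 for all t ∈ (a,b), the function t ↦ θ(γ(t)) is non-increasing on (a,b). -/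
open scoped BigOperators

noncomputable section

/-- A point of the plane `ℝ²`. -/
abbrev Pt : Type := EuclideanSpace ℝ (Fin 2)

/-- A planar configuration of `n` bodies. -/
abbrev Conf (n : ℕ) : Type := Fin n → Pt

/-- The Newtonian potential `U(q) = ∑_{i<j} mᵢmⱼ/|qᵢ-qⱼ|`. -/
def potU (n : ℕ) (m : Fin n → ℝ) (q : Conf n) : ℝ :=
  ∑ i : Fin n, ∑ j : Fin n, if i < j then m i * m j / ‖q i - q j‖ else 0

/-- The gradient `∇_{qᵢ}U(q)` of `U` with respect to the position of the `i`-th body. -/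
def gradU (n : ℕ) (m : Fin n → ℝ) (q : Conf n) (i : Fin n) : Pt :=
  gradient (fun x => potU n m (Function.update q i x)) (q i)

/-- The matrix `S(s) = diag(s,1)` acting on `ℝ²`. -/
def Smat (s : ℝ) (v : Pt) : Pt := WithLp.toLp 2 (fun k => if k = 0 then s * v k else v k)

/-- `Ŝ(s)` acting diagonally on configurations. -/
def Shat (n : ℕ) (s : ℝ) (v : Conf n) : Conf n := fun i => Smat s (v i)

/-- The mass inner product `⟨v,w⟩_M = ∑ᵢ mᵢ⟨vᵢ,wᵢ⟩`. -/
def mInner (n : ℕ) (m : Fin n → ℝ) (v w : Conf n) : ℝ :=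
  ∑ i, m i * (inner ℝ (v i) (w i) : ℝ)

/-- The `S`-weighted moment of inertia `I_s(q) = ⟨Ŝ(s)q, q⟩_M`. -/
def Imom (n : ℕ) (m : Fin n → ℝ) (s : ℝ) (q : Conf n) : ℝ :=
  mInner n m (Shat n s q) q

/-- `q` is collision-free. -/
def CollisionFree (n : ℕ) (q : Conf n) : Prop := ∀ i j, i ≠ j → q i ≠ q j

/-- `q` has center of mass at the origin. -/
def Centered (n : ℕ) (m : Fin n → ℝ) (q : Conf n) : Prop := (∑ i, m i • q i) = 0

/-- A normalized S-balanced configuration with parameter `s`: collision-free, centered,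
`I_s(q) = 1`, and `∇_{qᵢ}U(q) + U(q)·mᵢ·S(s)qᵢ = 0` for all `i`. -/
def IsSBC (n : ℕ) (m : Fin n → ℝ) (s : ℝ) (q : Conf n) : Prop :=
  CollisionFree n q ∧ Centered n m q ∧ Imom n m s q = 1 ∧
    ∀ i, gradU n m q i + potU n m q • (m i • Smat s (q i)) = 0

/-- A 1-CSBC: a normalized collinear central configuration on the y-axis. -/
def Is1CSBC (n : ℕ) (m : Fin n → ℝ) (q : Conf n) : Prop :=
  (∀ i, q i 0 = 0) ∧ IsSBC n m 1 q

/-- The collinearity function `θ(q) = max_{i≠j} arccos(|⟨(qᵢ-qⱼ)/|qᵢ-qⱼ|, e₁⟩|)`. -/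
def thetaFn (n : ℕ) (q : Conf n) : ℝ :=
  sSup {t : ℝ | ∃ i j : Fin n, i ≠ j ∧ t = Real.arccos (|(q i - q j) 0| / ‖q i - q j‖)}

/-- The (mass-metric) gradient vector field of `U` restricted to the ellipsoid `{I_s = 1}`:
`G(q) = M⁻¹∇U(q) - (⟨M⁻¹∇U(q), Ŝ(s)q⟩_M / ⟨Ŝ(s)q, Ŝ(s)q⟩_M)·Ŝ(s)q`. -/
def Gfield (n : ℕ) (m : Fin n → ℝ) (s : ℝ) (q : Conf n) : Conf n :=
  (fun i => (m i)⁻¹ • gradU n m q i) -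
    (mInner n m (fun i => (m i)⁻¹ • gradU n m q i) (Shat n s q) /
        mInner n m (Shat n s q) (Shat n s q)) • Shat n s q

/-!
Measure how far a pair is from horizontal by `sin²∠(qᵢ - qⱼ, e₁)`; then `θ` is an increasing
function of the maximum of these over all pairs. A maximum of finitely many differentiable
functions cannot increase if each of them has non-positive derivative whenever it attains the
maximum. For a maximising pair, with `v = qᵢ - qⱼ = (X, Y)`, the derivative of `sin²` has the sign
of `XY (v × (Gᵢ - Gⱼ))`. The constraint part of `G` contributes `λ (s - 1) X²Y²`, and `λ ≤ 0`
because `⟨∇U, Ŝ(s)q⟩ = -½ ∑ᵢₖ mᵢmₖ ⟨qᵢ - qₖ, S(s)(qᵢ - qₖ)⟩ / |qᵢ - qₖ|³` with `S(s)` positive.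
A body `k` contributes `mₖ XY (v × a)(|a|⁻³ - |b|⁻³)` with `a = qₖ - qᵢ` and `b = qₖ - qⱼ = a + v`.
Since `θ ≤ π/4` gives `Y² ≤ X²` and maximality makes `a` and `b` no steeper than `v`, the sign of
`v × a` decides which of `|a|`, `|b|` is larger, and the term is `≤ 0`.
-/

open Finset Filter Topology

open scoped RealInnerProductSpace

lemma inner_pt (v w : Pt) : ⟪v, w⟫ = v 0 * w 0 + v 1 * w 1 := by
  simp only [PiLp.inner_apply, RCLike.inner_apply, Real.ringHom_apply, Fin.sum_univ_two]
  ring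

lemma norm_sq_pt (v : Pt) : ‖v‖ ^ 2 = v 0 ^ 2 + v 1 ^ 2 := by
  simp [EuclideanSpace.norm_sq_eq, Fin.sum_univ_two]

@[simp] lemma Smat_apply_zero (s : ℝ) (v : Pt) : Smat s v 0 = s * v 0 := by simp [Smat]

@[simp] lemma Smat_apply_one (s : ℝ) (v : Pt) : Smat s v 1 = v 1 := by simp [Smat]

def cross (v w : Pt) : ℝ := v 0 * w 1 - v 1 * w 0

lemma cross_sub_right (v w w' : Pt) : cross v (w - w') = cross v w - cross v w' := by
  simp only [cross, PiLp.sub_apply]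
  ring

lemma cross_sum_right {ι : Type*} (v : Pt) (t : Finset ι) (w : ι → Pt) :
    cross v (∑ k ∈ t, w k) = ∑ k ∈ t, cross v (w k) := by
  simp [cross, mul_sum, sum_sub_distrib]

/-- `sin²` of the angle between `v` and the `x`-axis (`0` for `v = 0`). -/
def sinSqAngle (v : Pt) : ℝ := v 1 ^ 2 / ‖v‖ ^ 2

lemma hasFDerivAt_inv_norm_sub {F : Type*} [NormedAddCommGroup F] [InnerProductSpace ℝ F]
    {c x : F} (h : x ≠ c) :
    HasFDerivAt (fun y => ‖y - c‖⁻¹) (innerSL ℝ ((‖c - x‖ ^ 3)⁻¹ • (c - x))) x := by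
  have hpos : 0 < ‖x - c‖ := norm_pos_iff.2 (sub_ne_zero.2 h)
  have hsqrt := ((Real.hasDerivAt_sqrt (by positivity)).inv (by positivity)).comp_hasFDerivAt x
    ((hasFDerivAt_id x).sub_const c).norm_sq
  simp only [Function.comp_def, id, Pi.inv_apply, Real.sqrt_sq (norm_nonneg _)] at hsqrt
  refine hsqrt.congr_fderiv ?_
  ext w
  rw [norm_sub_rev c x, ← neg_sub x c]
  simp only [one_div, mul_inv_rev, map_sub, ContinuousLinearMap.comp_id, smul_apply, sub_apply,
    coe_innerSL_apply, nsmul_eq_mul, Nat.cast_ofNat, smul_eq_mul, neg_sub, map_smul]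
  field_simp
  ring

lemma sum_sum_lt_ite_eq {M : Type*} [AddCommMonoid M] {n : ℕ} (i : Fin n) (w : Fin n → M) :
    ∑ a, ∑ b, (if a < b then (if a = i then w b else if b = i then w a else 0) else 0)
      = ∑ k, if k = i then 0 else w k := by
  have split : ∀ a b : Fin n,
      (if a < b then (if a = i then w b else if b = i then w a else 0) else 0)
        = (if a = i then (if i < b then w b else 0) else 0)
          + (if b = i then (if a < i then w a else 0) else 0) := by
    intro a b
    by_cases ha : a = i <;> by_cases hb : b = i <;> subst_vars <;> simp [*]
  have below : ∑ a, ∑ b, (if a = i then (if i < b then w b else 0) else 0)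
      = ∑ k, if i < k then w k else (0 : M) := by simp
  have above : ∑ a, ∑ b, (if b = i then (if a < i then w a else 0) else 0)
      = ∑ k, if k < i then w k else (0 : M) := by simp
  simp only [split, sum_add_distrib, below, above]
  rw [← sum_add_distrib]
  refine sum_congr rfl fun k _ => ?_
  rcases lt_trichotomy k i with h | rfl | h
  · simp [h, h.ne, h.not_gt]
  · simp
  · simp [h, h.ne', h.not_gt]

lemma hasFDerivAt_potU_update {n : ℕ} (m : Fin n → ℝ) {q : Conf n} (hcf : CollisionFree n q)
    (i : Fin n) :
    HasFDerivAt (fun x => potU n m (Function.update q i x))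
      (innerSL ℝ (∑ k, (m i * m k / ‖q k - q i‖ ^ 3) • (q k - q i))) (q i) := by
  set W : Fin n → StrongDual ℝ Pt :=
    fun k => innerSL ℝ ((m i * m k / ‖q k - q i‖ ^ 3) • (q k - q i)) with hWdef
  have hW : ∀ k ≠ i, HasFDerivAt (fun x => m i * m k / ‖x - q k‖) (W k) (q i) := by
    intro k hk
    have := (hasFDerivAt_inv_norm_sub (hcf i k hk.symm)).const_mul (m i * m k)
    simpa [hWdef, div_eq_mul_inv, smul_smul] using this
  have hterm : ∀ a b, HasFDerivAt
      (fun x => if a < b then m a * m b / ‖Function.update q i x a - Function.update q i x b‖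
        else 0)
      (if a < b then (if a = i then W b else if b = i then W a else 0) else 0) (q i) := by
    intro a b
    by_cases hab : a < b
    · by_cases ha : a = i
      · subst ha
        simpa [hab, hab.ne'] using hW b hab.ne'
      · by_cases hb : b = i
        · subst hb
          simpa [hab, ha, norm_sub_rev, mul_comm] using hW a ha
        · simpa [hab, ha, hb] using hasFDerivAt_const (𝕜 := ℝ) (m a * m b / ‖q a - q b‖) (q i)
    · simpa [hab] using hasFDerivAt_const (𝕜 := ℝ) (0 : ℝ) (q i)
  have hsum := HasFDerivAt.fun_sum (u := univ) fun a _ =>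
    HasFDerivAt.fun_sum (u := univ) fun b _ => hterm a b
  rw [sum_sum_lt_ite_eq] at hsum
  refine hsum.congr_fderiv ?_
  rw [map_sum]
  refine sum_congr rfl fun k _ => ?_
  split_ifs with hk <;> simp [hk, hWdef]

lemma gradU_eq {n : ℕ} (m : Fin n → ℝ) {q : Conf n} (hcf : CollisionFree n q) (i : Fin n) :
    gradU n m q i = ∑ k, (m i * m k / ‖q k - q i‖ ^ 3) • (q k - q i) :=
  (hasGradientAt_iff_hasFDerivAt.2 (hasFDerivAt_potU_update m hcf i)).gradient

def lagrangeMult (n : ℕ) (m : Fin n → ℝ) (s : ℝ) (q : Conf n) : ℝ :=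
  mInner n m (fun i => (m i)⁻¹ • gradU n m q i) (Shat n s q) /
    mInner n m (Shat n s q) (Shat n s q)

lemma Gfield_apply_eq {n : ℕ} {m : Fin n → ℝ} (hm : ∀ i, 0 < m i) (s : ℝ) {q : Conf n}
    (hcf : CollisionFree n q) (i : Fin n) :
    Gfield n m s q i
      = ∑ k, (m k / ‖q k - q i‖ ^ 3) • (q k - q i) - lagrangeMult n m s q • Smat s (q i) := by
  simp only [Gfield, Pi.sub_apply, Pi.smul_apply, Shat, lagrangeMult, gradU_eq m hcf i,
    smul_sum, smul_smul]
  congr 2 with k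
  field_simp [(hm i).ne']

lemma Gfield_apply_one_eq_zero {n : ℕ} (m : Fin n → ℝ) (s : ℝ) {q : Conf n}
    (hcf : CollisionFree n q) (hq : ∀ i, q i 1 = 0) (i : Fin n) : Gfield n m s q i 1 = 0 := by
  simp [Gfield, Shat, gradU_eq m hcf i, hq]

lemma sum_sum_nonpos_of_add_swap_nonpos {ι : Type*} [Fintype ι] {f : ι → ι → ℝ}
    (h : ∀ i k, f i k + f k i ≤ 0) : ∑ i, ∑ k, f i k ≤ 0 := by
  have hswap : ∑ i, ∑ k, f i k = ∑ i, ∑ k, f k i := sum_comm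
  have : 2 * ∑ i, ∑ k, f i k = ∑ i, ∑ k, (f i k + f k i) := by
    simp only [sum_add_distrib, ← hswap]
    ring
  linarith [sum_nonpos fun i (_ : i ∈ univ) => sum_nonpos fun k (_ : k ∈ univ) => h i k]

lemma lagrangeMult_nonpos {n : ℕ} {m : Fin n → ℝ} (hm : ∀ i, 0 < m i) {s : ℝ} (hs : 0 ≤ s)
    {q : Conf n} (hcf : CollisionFree n q) : lagrangeMult n m s q ≤ 0 := by
  refine div_nonpos_of_nonpos_of_nonneg ?_ (sum_nonneg fun i _ =>
    mul_nonneg (hm i).le real_inner_self_nonneg)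
  have hnum : mInner n m (fun i => (m i)⁻¹ • gradU n m q i) (Shat n s q)
      = ∑ i, ∑ k, m i * m k / ‖q k - q i‖ ^ 3 * ⟪q k - q i, Smat s (q i)⟫ := by
    refine sum_congr rfl fun i _ => ?_
    rw [real_inner_smul_left, gradU_eq m hcf i, sum_inner, mul_sum, mul_sum]
    refine sum_congr rfl fun k _ => ?_
    rw [real_inner_smul_left, Shat]
    field_simp [(hm i).ne']
  rw [hnum]
  refine sum_sum_nonpos_of_add_swap_nonpos fun i k => ?_
  have hc : 0 ≤ m i * m k / ‖q k - q i‖ ^ 3 := by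
    have := hm i; have := hm k; positivity
  rw [norm_sub_rev (q i), mul_comm (m k), ← mul_add, inner_pt, inner_pt]
  refine mul_nonpos_of_nonneg_of_nonpos hc ?_
  simp only [PiLp.sub_apply, Smat_apply_zero, Smat_apply_one]
  nlinarith [sq_nonneg (q k 0 - q i 0), sq_nonneg (q k 1 - q i 1)]

lemma mul_cross_mul_inner_nonpos {v c : Pt} (hv : v 1 ^ 2 ≤ v 0 ^ 2)
    (hc : c 1 ^ 2 * v 0 ^ 2 ≤ v 1 ^ 2 * c 0 ^ 2) : v 0 * v 1 * cross v c * ⟪v, c⟫ ≤ 0 := by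
  have hmix : v 0 * v 1 * c 0 * c 1 ≤ v 1 ^ 2 * c 0 ^ 2 :=
    (le_abs_self _).trans (abs_le_of_sq_le_sq (by nlinarith [sq_nonneg (v 1 * c 0)])
      (by positivity))
  -- the left side is `X²Y²(c₁² - c₀²) + XY(X² - Y²) c₀c₁` for `v = (X, Y)`
  rw [cross, inner_pt]
  nlinarith [mul_le_mul_of_nonneg_right hmix (sub_nonneg.2 hv),
    mul_le_mul_of_nonneg_left hc (sq_nonneg (v 1))]

lemma inv_pow_three_sub_inv_pow_three {α β : ℝ} (hα : 0 < α) (hβ : 0 < β) :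
    (α ^ 3)⁻¹ - (β ^ 3)⁻¹
      = (β ^ 2 - α ^ 2) * ((α ^ 2 + α * β + β ^ 2) / ((α + β) * α ^ 3 * β ^ 3)) := by
  field_simp
  ring

lemma mul_cross_mul_inv_cube_sub_nonpos {v a b : Pt} (hab : b - a = v)
    (hv : v 1 ^ 2 ≤ v 0 ^ 2) (ha : a 1 ^ 2 * v 0 ^ 2 ≤ v 1 ^ 2 * a 0 ^ 2)
    (hb : b 1 ^ 2 * v 0 ^ 2 ≤ v 1 ^ 2 * b 0 ^ 2) :
    v 0 * v 1 * cross v a * ((‖a‖ ^ 3)⁻¹ - (‖b‖ ^ 3)⁻¹) ≤ 0 := by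
  subst hab
  rcases eq_or_ne a 0 with rfl | ha0
  · simp [cross]
  rcases eq_or_ne b 0 with rfl | hb0
  · simp [cross, mul_comm]
  have hcross : cross (b - a) b = cross (b - a) a := by
    simp only [cross, PiLp.sub_apply]
    ring
  have hnorm : ‖b‖ ^ 2 - ‖a‖ ^ 2 = ⟪b - a, a⟫ + ⟪b - a, b⟫ := by
    simp only [norm_sq_pt, inner_pt, PiLp.sub_apply]
    ring
  have hPa := mul_cross_mul_inner_nonpos hv ha
  have hPb := mul_cross_mul_inner_nonpos hv hb
  rw [hcross] at hPb
  rw [inv_pow_three_sub_inv_pow_three (norm_pos_iff.2 ha0) (norm_pos_iff.2 hb0), hnorm,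
    ← mul_assoc]
  exact mul_nonpos_of_nonpos_of_nonneg (by linarith) (by positivity)

lemma sq_mul_sq_le_of_sinSqAngle_le {c v : Pt} (h : sinSqAngle c ≤ sinSqAngle v) :
    c 1 ^ 2 * v 0 ^ 2 ≤ v 1 ^ 2 * c 0 ^ 2 := by
  rcases eq_or_ne c 0 with rfl | hc
  · simp
  rcases eq_or_ne v 0 with rfl | hv
  · simp
  rw [sinSqAngle, sinSqAngle, div_le_div_iff₀ (by positivity) (by positivity), norm_sq_pt,
    norm_sq_pt] at h
  nlinarith

lemma mul_cross_Gfield_sub_nonpos {n : ℕ} {m : Fin n → ℝ} (hm : ∀ i, 0 < m i) {s : ℝ}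
    (hs : 1 < s) {q : Conf n} (hcf : CollisionFree n q) {i j : Fin n}
    (hmax : ∀ k l, sinSqAngle (q k - q l) ≤ sinSqAngle (q i - q j))
    (hv : (q i - q j) 1 ^ 2 ≤ (q i - q j) 0 ^ 2) :
    (q i - q j) 0 * (q i - q j) 1 * cross (q i - q j) (Gfield n m s q i - Gfield n m s q j)
      ≤ 0 := by
  set v := q i - q j with hvdef
  set μ := lagrangeMult n m s q
  have hsplit : v 0 * v 1 * cross v (Gfield n m s q i - Gfield n m s q j)
      = ∑ k, m k * (v 0 * v 1 * cross v (q k - q i)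
          * ((‖q k - q i‖ ^ 3)⁻¹ - (‖q k - q j‖ ^ 3)⁻¹))
        + μ * (s - 1) * (v 0 * v 1) ^ 2 := by
    rw [Gfield_apply_eq hm s hcf i, Gfield_apply_eq hm s hcf j, sub_sub_sub_comm,
      ← sum_sub_distrib, cross_sub_right, cross_sum_right, mul_sub, mul_sum, sub_eq_add_neg]
    congr 1
    · refine sum_congr rfl fun k _ => ?_
      simp only [cross, hvdef, PiLp.sub_apply, PiLp.smul_apply, smul_eq_mul]
      ring
    · simp only [cross, hvdef, PiLp.sub_apply, PiLp.smul_apply, smul_eq_mul, Smat_apply_zero,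
        Smat_apply_one]
      ring
  rw [hsplit]
  have hk : ∀ k, v 0 * v 1 * cross v (q k - q i) * ((‖q k - q i‖ ^ 3)⁻¹ - (‖q k - q j‖ ^ 3)⁻¹)
      ≤ 0 := fun k =>
    mul_cross_mul_inv_cube_sub_nonpos (by rw [hvdef]; abel) hv
      (sq_mul_sq_le_of_sinSqAngle_le (hmax k i)) (sq_mul_sq_le_of_sinSqAngle_le (hmax k j))
  have hμ : μ * (s - 1) * (v 0 * v 1) ^ 2 ≤ 0 :=
    mul_nonpos_of_nonpos_of_nonneg
      (mul_nonpos_of_nonpos_of_nonneg (lagrangeMult_nonpos hm (by linarith) hcf) (by linarith))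
      (sq_nonneg _)
  have := sum_nonpos fun k (_ : k ∈ univ) => mul_nonpos_of_nonneg_of_nonpos (hm k).le (hk k)
  linarith

lemma eventually_lt_add_mul_sub_of_hasDerivAt {f : ℝ → ℝ} {f' x c r : ℝ} (hd : HasDerivAt f f' x)
    (hfc : f x ≤ c) (hf' : f x = c → f' ≤ 0) (hr : 0 < r) :
    ∀ᶠ z in 𝓝[>] x, f z < c + r * (z - x) := by
  rcases hfc.eq_or_lt with heq | hlt
  · have hslope := hd.hasDerivWithinAt.limsup_slope_le' (lt_irrefl x) ((hf' heq).trans_lt hr)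
    filter_upwards [hslope, self_mem_nhdsWithin] with z hz hxz
    rw [slope_def_field, div_lt_iff₀ (sub_pos.2 hxz)] at hz
    linarith
  · filter_upwards [nhdsWithin_le_nhds (hd.continuousAt.eventually_lt continuousAt_const hlt),
      self_mem_nhdsWithin] with z hz hxz
    nlinarith [mul_pos hr (sub_pos.2 (show x < z from hxz))]

lemma antitoneOn_sup'_of_hasDerivAt {ι : Type*} [Fintype ι] [Nonempty ι] {f f' : ι → ℝ → ℝ}
    {a b : ℝ} (hd : ∀ p, ∀ t ∈ Set.Ioo a b, HasDerivAt (f p) (f' p t) t)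
    (hmax : ∀ t ∈ Set.Ioo a b, ∀ p, (∀ r, f r t ≤ f p t) → f' p t ≤ 0) :
    AntitoneOn (fun t => univ.sup' univ_nonempty fun p => f p t) (Set.Ioo a b) := by
  intro t₁ ht₁ t₂ ht₂ h12
  set F := fun t => univ.sup' univ_nonempty fun p => f p t
  have hsub : Set.Icc t₁ t₂ ⊆ Set.Ioo a b := Set.Icc_subset_Ioo ht₁.1 ht₂.2
  have hFc : ContinuousOn F (Set.Icc t₁ t₂) := fun x hx =>
    (ContinuousAt.finset_sup'_apply _ fun p _ => (hd p x (hsub hx)).continuousAt).continuousWithinAt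
  refine image_le_of_liminf_slope_right_le_deriv_boundary hFc (B := fun _ => F t₁) le_rfl
    continuousOn_const
    (fun x _ => hasDerivWithinAt_const x _ (F t₁)) (fun x hx r hr => ?_) (Set.right_mem_Icc.2 h12)
  have hx : x ∈ Set.Ioo a b := hsub (Set.Ico_subset_Icc_self hx)
  have hle : ∀ p, f p x ≤ F x := fun p => le_sup' (fun p => f p x) (mem_univ p)
  have hp : ∀ p, ∀ᶠ z in 𝓝[>] x, f p z < F x + r * (z - x) := fun p =>
    eventually_lt_add_mul_sub_of_hasDerivAt (hd p x hx) (hle p)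
      (fun h => hmax x hx p fun q => h ▸ hle q) hr
  refine Filter.Eventually.frequently ?_
  filter_upwards [Filter.eventually_all.2 hp, self_mem_nhdsWithin] with z hz hxz
  rw [slope_def_field, div_lt_iff₀ (sub_pos.2 hxz)]
  have : F z < F x + r * (z - x) := (sup'_lt_iff _).2 fun p _ => hz p
  linarith

lemma hasDerivAt_sinSqAngle {v : ℝ → Pt} {v' : Pt} {t : ℝ} (hv : HasDerivAt v v' t)
    (h0 : v t ≠ 0) :
    HasDerivAt (fun t => sinSqAngle (v t)) (2 * (v t 0 * v t 1 * cross (v t) v') / ‖v t‖ ^ 4)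
      t := by
  have hy : HasDerivAt (fun t => v t 1) (v' 1) t :=
    (EuclideanSpace.proj (𝕜 := ℝ) (1 : Fin 2)).hasFDerivAt.comp_hasDerivAt t hv
  refine ((hy.pow 2).div hv.norm_sq (by positivity)).congr_deriv ?_
  rw [show ‖v t‖ ^ 4 = (‖v t‖ ^ 2) ^ 2 by ring, inner_pt, norm_sq_pt, cross, Pi.pow_apply]
  field_simp
  ring

lemma thetaFn_set_finite {n : ℕ} (q : Conf n) :
    {t : ℝ | ∃ i j : Fin n, i ≠ j ∧ t = Real.arccos (|(q i - q j) 0| / ‖q i - q j‖)}.Finite :=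
  (Set.finite_range fun p : Fin n × Fin n =>
    Real.arccos (|(q p.1 - q p.2) 0| / ‖q p.1 - q p.2‖)).subset
      (by rintro _ ⟨i, j, -, rfl⟩; exact ⟨(i, j), rfl⟩)

lemma arccos_le_thetaFn {n : ℕ} (q : Conf n) {i j : Fin n} (hij : i ≠ j) :
    Real.arccos (|(q i - q j) 0| / ‖q i - q j‖) ≤ thetaFn n q :=
  le_csSup (thetaFn_set_finite q).bddAbove ⟨i, j, hij, rfl⟩

lemma exists_ne_of_thetaFn_pos {n : ℕ} {q : Conf n} (h : 0 < thetaFn n q) :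
    ∃ i j : Fin n, i ≠ j := by
  by_contra! hdiag
  have hempty : {t : ℝ | ∃ i j : Fin n, i ≠ j ∧
      t = Real.arccos (|(q i - q j) 0| / ‖q i - q j‖)} = ∅ :=
    Set.eq_empty_of_forall_notMem fun _ ⟨i, j, hij, _⟩ => hij (hdiag i j)
  rw [thetaFn, hempty, Real.sSup_empty] at h
  exact h.false

lemma arccos_abs_div_norm_eq {v : Pt} (hv : v ≠ 0) :
    Real.arccos (|v 0| / ‖v‖) = Real.arccos √(1 - sinSqAngle v) := by
  rw [← Real.sqrt_sq (by positivity : 0 ≤ |v 0| / ‖v‖), div_pow, sq_abs, sinSqAngle,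
    one_sub_div (by positivity), norm_sq_pt, add_sub_cancel_right]

lemma thetaFn_eq_arccos_sqrt_sup' {n : ℕ} [Nonempty (Fin n × Fin n)] {q : Conf n}
    (hcf : CollisionFree n q) :
    thetaFn n q
      = Real.arccos √(1 - univ.sup' univ_nonempty fun p : Fin n × Fin n =>
          sinSqAngle (q p.1 - q p.2)) := by
  have hmono : Monotone fun u : ℝ => Real.arccos √(1 - u) := fun u w huw =>
    Real.arccos_le_arccos (Real.sqrt_le_sqrt (by linarith))
  apply le_antisymm
  · refine Real.sSup_le ?_ (Real.arccos_nonneg _)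
    rintro _ ⟨i, j, hij, rfl⟩
    rw [arccos_abs_div_norm_eq (sub_ne_zero.2 (hcf i j hij))]
    exact hmono (le_sup' (fun p : Fin n × Fin n => sinSqAngle (q p.1 - q p.2)) (mem_univ (i, j)))
  · obtain ⟨⟨i, j⟩, -, hF⟩ := exists_mem_eq_sup' univ_nonempty
      fun p : Fin n × Fin n => sinSqAngle (q p.1 - q p.2)
    rw [hF]
    rcases eq_or_ne i j with rfl | hij
    · have hθ : 0 ≤ thetaFn n q := Real.sSup_nonneg fun _ ⟨_, _, _, h⟩ =>
        h ▸ Real.arccos_nonneg _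
      simpa [sinSqAngle] using hθ
    · rw [← arccos_abs_div_norm_eq (sub_ne_zero.2 (hcf i j hij))]
      exact arccos_le_thetaFn q hij

lemma sq_sub_apply_one_le_of_thetaFn_le {n : ℕ} {q : Conf n} (h : thetaFn n q ≤ Real.pi / 4)
    (i j : Fin n) : (q i - q j) 1 ^ 2 ≤ (q i - q j) 0 ^ 2 := by
  rcases eq_or_ne i j with rfl | hij
  · simp
  set v := q i - q j
  have hcos : √2 / 2 ≤ |v 0| / ‖v‖ :=
    Real.arccos_le_pi_div_four.1 ((arccos_le_thetaFn q hij).trans h)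
  have hv : 0 < ‖v‖ := by
    by_contra! hv
    rw [norm_le_zero_iff.1 hv, norm_zero, div_zero] at hcos
    linarith [Real.sqrt_pos.2 (zero_lt_two' ℝ)]
  have hsq := pow_le_pow_left₀ (by positivity) hcos 2
  rw [div_pow, div_pow, Real.sq_sqrt zero_le_two, sq_abs, le_div_iff₀ (by positivity),
    norm_sq_pt] at hsq
  linarith

theorem stmt10_general (n : ℕ) (m : Fin n → ℝ) (hm : ∀ i, 0 < m i)
    (s : ℝ) (hs : 1 < s) :
    (∀ q : Conf n, CollisionFree n q → (∀ i, q i 1 = 0) → ∀ i, Gfield n m s q i 1 = 0) ∧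
    (∀ (a b : ℝ) (γ : ℝ → Conf n),
      (∀ t ∈ Set.Ioo a b,
        CollisionFree n (γ t) ∧ Centered n m (γ t) ∧ Imom n m s (γ t) = 1) →
      (∀ t ∈ Set.Ioo a b, HasDerivAt γ (Gfield n m s (γ t)) t) →
      (∀ t ∈ Set.Ioo a b, 0 < thetaFn n (γ t) ∧ thetaFn n (γ t) ≤ Real.pi / 4) →
      AntitoneOn (fun t => thetaFn n (γ t)) (Set.Ioo a b)) := by
  refine ⟨fun q hcf hq i => Gfield_apply_one_eq_zero m s hcf hq i, ?_⟩
  intro a b γ hγ hγ' hθ t₁ ht₁ t₂ ht₂ h12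
  obtain ⟨i, j, -⟩ := exists_ne_of_thetaFn_pos (hθ t₁ ht₁).1
  have : Nonempty (Fin n × Fin n) := ⟨(i, j)⟩
  set v : Fin n × Fin n → ℝ → Pt := fun p t => γ t p.1 - γ t p.2
  set v' : Fin n × Fin n → ℝ → Pt := fun p t => Gfield n m s (γ t) p.1 - Gfield n m s (γ t) p.2
  have hsup := antitoneOn_sup'_of_hasDerivAt (f := fun p t => sinSqAngle (v p t))
    (f' := fun p t => 2 * (v p t 0 * v p t 1 * cross (v p t) (v' p t)) / ‖v p t‖ ^ 4)
    ?_ ?_ ht₁ ht₂ h12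
  · show thetaFn n (γ t₂) ≤ thetaFn n (γ t₁)
    rw [thetaFn_eq_arccos_sqrt_sup' (hγ t₁ ht₁).1, thetaFn_eq_arccos_sqrt_sup' (hγ t₂ ht₂).1]
    exact Real.arccos_le_arccos (Real.sqrt_le_sqrt (sub_le_sub_left hsup 1))
  · intro p t ht
    rcases eq_or_ne p.1 p.2 with h | h
    · simpa [v, h, sinSqAngle] using hasDerivAt_const t (0 : ℝ)
    · exact hasDerivAt_sinSqAngle ((hasDerivAt_pi.1 (hγ' t ht) p.1).sub
        (hasDerivAt_pi.1 (hγ' t ht) p.2)) (sub_ne_zero.2 ((hγ t ht).1 _ _ h))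
  · intro t ht p hmax
    have := mul_cross_Gfield_sub_nonpos hm hs (hγ t ht).1 (fun k l => hmax (k, l))
      (sq_sub_apply_one_le_of_thetaFn_le (hθ t ht).2 p.1 p.2)
    exact div_nonpos_of_nonpos_of_nonneg (by linarith) (by positivity)

/-- The 45°-theorem for S-balanced configurations: (i) the set of configurations collinear
along the x-axis is invariant under the gradient vector field `G`; (ii) along any solution of
`γ' = G(γ)` with `0 < θ(γ) ≤ π/4`, the collinearity function `θ` is non-increasing. -/
theorem stmt10 (n : ℕ) (hn : 3 ≤ n) (m : Fin n → ℝ) (hm : ∀ i, 0 < m i)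
    (s : ℝ) (hs : 1 < s) :
    (∀ q : Conf n, CollisionFree n q → (∀ i, q i 1 = 0) → ∀ i, Gfield n m s q i 1 = 0) ∧
    (∀ (a b : ℝ) (γ : ℝ → Conf n),
      (∀ t ∈ Set.Ioo a b,
        CollisionFree n (γ t) ∧ Centered n m (γ t) ∧ Imom n m s (γ t) = 1) →
      (∀ t ∈ Set.Ioo a b, HasDerivAt γ (Gfield n m s (γ t)) t) →
      (∀ t ∈ Set.Ioo a b, 0 < thetaFn n (γ t) ∧ thetaFn n (γ t) ≤ Real.pi / 4) →
      AntitoneOn (fun t => thetaFn n (γ t)) (Set.Ioo a b)) :=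
  stmt10_general n m hm s hs
end
end

section
/- Fix an integer n ≥ 2, masses m₁,…,mₙ > 0, and s > 1. A configuration q ∈ (ℝ²)ⁿ with all bodies on the x-axis ℝ×{0} is an s-CSBC (a normalized S-balanced configuration with parameter s) if and only if √s·q is a normalized collinear central configuration on the x-axis, i.e. (√s·q) is collision-free and centered with ⟨√s·q, √s·q⟩_M = 1 and ∇_{qᵢ}U(√s·q) + U(√s·q)·mᵢ·√s·qᵢ = 0 for all i. -/
open scoped BigOperators

noncomputable section

/-!
On the x-axis `S(s)` acts as multiplication by `s`, so `I_s(q) = s⟨q,q⟩_M = ⟨√s q, √s q⟩_M`.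
Since `U` is homogeneous of degree `-1`, scaling by `c = √s` multiplies `∇U` by `c⁻²` and leaves
`U(q)·mᵢ·qᵢ` unchanged; hence the balance equation of `√s q` is `s⁻¹` times the S-balance equation
of `q`, and collision-freeness and centering are invariant under the scaling.
-/

section Gradient

-- Neither lemma needs differentiability: off the differentiable points both sides are `0`.
variable {F : Type*} [NormedAddCommGroup F] [InnerProductSpace ℝ F] [CompleteSpace F]

lemma gradient_const_mul (a : ℝ) (f : F → ℝ) (x : F) :
    gradient (fun y => a * f y) x = a • gradient f x := by
  simp only [gradient, ← smul_eq_mul, ← Pi.smul_def, fderiv_const_smul_field, Pi.smul_apply,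
    map_smul]

lemma gradient_comp_smul (c : ℝ) (f : F → ℝ) (x : F) :
    gradient (fun y => f (c • y)) x = c • gradient f (c • x) := by
  simp only [gradient, fderiv_comp_smul, map_smul]

end Gradient

lemma Smat_eq_smul_of_apply_one_eq_zero (s : ℝ) {v : Pt} (hv : v 1 = 0) : Smat s v = s • v := by
  ext k
  fin_cases k <;> simp [Smat, hv]

section Scaling

variable {n : ℕ} (m : Fin n → ℝ) {c : ℝ}

lemma collisionFree_smul_iff (hc : c ≠ 0) (q : Conf n) :
    CollisionFree n (c • q) ↔ CollisionFree n q := by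
  simp only [CollisionFree, Pi.smul_apply, ne_eq, smul_right_inj hc]

lemma centered_smul_iff (hc : c ≠ 0) (q : Conf n) :
    Centered n m (c • q) ↔ Centered n m q := by
  simp only [Centered, Pi.smul_apply, smul_comm (m _) c, ← Finset.smul_sum, smul_eq_zero, hc,
    false_or]

lemma mInner_smul_left (c : ℝ) (v w : Conf n) :
    mInner n m (c • v) w = c * mInner n m v w := by
  simp only [mInner, Pi.smul_apply, real_inner_smul_left, Finset.mul_sum]
  exact Finset.sum_congr rfl fun _ _ => by ring

lemma mInner_smul_right (c : ℝ) (v w : Conf n) :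
    mInner n m v (c • w) = c * mInner n m v w := by
  simp only [mInner, Pi.smul_apply, real_inner_smul_right, Finset.mul_sum]
  exact Finset.sum_congr rfl fun _ _ => by ring

lemma Imom_eq_mul_mInner_of_apply_one_eq_zero (s : ℝ) {q : Conf n} (hq : ∀ i, q i 1 = 0) :
    Imom n m s q = s * mInner n m q q := by
  have hS : Shat n s q = s • q := funext fun i => Smat_eq_smul_of_apply_one_eq_zero s (hq i)
  rw [Imom, hS, mInner_smul_left]

lemma potU_smul (c : ℝ) (q : Conf n) : potU n m (c • q) = |c|⁻¹ * potU n m q := by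
  simp only [potU, Finset.mul_sum, Pi.smul_apply, ← smul_sub, norm_smul, Real.norm_eq_abs]
  refine Finset.sum_congr rfl fun i _ => Finset.sum_congr rfl fun j _ => ?_
  split_ifs
  · field_simp
  · simp

lemma gradU_smul (hc : c ≠ 0) (q : Conf n) (i : Fin n) :
    gradU n m (c • q) i = (|c|⁻¹ * c⁻¹) • gradU n m q i := by
  have hpot : (fun x => potU n m (Function.update (c • q) i x)) =
      fun x => |c|⁻¹ * potU n m (Function.update q i (c⁻¹ • x)) := by
    funext x
    rw [← potU_smul, ← Function.update_smul, smul_inv_smul₀ hc]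
  rw [gradU, hpot, gradient_const_mul,
    gradient_comp_smul c⁻¹ (fun y => potU n m (Function.update q i y)), Pi.smul_apply,
    inv_smul_smul₀ hc, smul_smul, gradU]

end Scaling

theorem stmt14_general (n : ℕ) (m : Fin n → ℝ)
    (s : ℝ) (hs : 1 < s) (q : Conf n) (hline : ∀ i, q i 1 = 0) :
    IsSBC n m s q ↔
      (CollisionFree n (Real.sqrt s • q) ∧ Centered n m (Real.sqrt s • q) ∧
        (∀ i, (Real.sqrt s • q) i 1 = 0) ∧
        mInner n m (Real.sqrt s • q) (Real.sqrt s • q) = 1 ∧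
        ∀ i, gradU n m (Real.sqrt s • q) i +
          potU n m (Real.sqrt s • q) • (m i • (Real.sqrt s • q) i) = 0) := by
  have hs0 : 0 < s := by linarith
  have hc : 0 < √s := Real.sqrt_pos.mpr hs0
  have hcc : √s * √s = s := Real.mul_self_sqrt hs0.le
  have hbalance : ∀ i, gradU n m (√s • q) i + potU n m (√s • q) • (m i • (√s • q) i) =
      s⁻¹ • (gradU n m q i + potU n m q • (m i • Smat s (q i))) := by
    intro i
    rw [gradU_smul m hc.ne', potU_smul, abs_of_pos hc, Pi.smul_apply,
      Smat_eq_smul_of_apply_one_eq_zero s (hline i), ← mul_inv, hcc, smul_add]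
    congr 1
    simp only [smul_smul, smul_comm (m i)]
    congr 1
    field_simp
  have hline' : ∀ i, (√s • q) i 1 = 0 := fun i => by simp [hline i]
  simp only [IsSBC, collisionFree_smul_iff hc.ne', centered_smul_iff m hc.ne',
    Imom_eq_mul_mInner_of_apply_one_eq_zero m s hline, mInner_smul_left, mInner_smul_right,
    ← mul_assoc, hcc, hbalance, smul_eq_zero, inv_eq_zero, hs0.ne', false_or, hline',
    implies_true, true_and]

/-- A configuration on the x-axis is an s-CSBC if and only if `√s·q` is a normalized
collinear central configuration on the x-axis. -/
theorem stmt14 (n : ℕ) (hn : 2 ≤ n) (m : Fin n → ℝ) (hm : ∀ i, 0 < m i)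
    (s : ℝ) (hs : 1 < s) (q : Conf n) (hline : ∀ i, q i 1 = 0) :
    IsSBC n m s q ↔
      (CollisionFree n (Real.sqrt s • q) ∧ Centered n m (Real.sqrt s • q) ∧
        (∀ i, (Real.sqrt s • q) i 1 = 0) ∧
        mInner n m (Real.sqrt s • q) (Real.sqrt s • q) = 1 ∧
        ∀ i, gradU n m (Real.sqrt s • q) i +
          potU n m (Real.sqrt s • q) • (m i • (Real.sqrt s • q) i) = 0) :=
  stmt14_general n m s hs q hline
end
end
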